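/- arXiv:1904.11946 — 6 statements merged into one kernel-verified Lean document; each statement's English description precedes it below -/
import Mathlib

section
/- Let G be a finite connected simple graph on vertex set V with shortest-path metric d_G, let H be a cycle subgraph of G with vertex set A and shortest-path metric d_H, and let ℓ(G,H) = max over distinct u, v ∈ A of d_H(u,v)/d_G(u,v). Suppose h : A → ℝ² is any map satisfying ‖h(a) − h(b)‖_∞ ≤ d_H(a,b) for all a, b ∈ A (for instance, a placement of the anchors on the boundary of a square grid). Then there exists a map g : V → ℝ² with g(a) = h(a) for every a ∈ A and ‖g(u) − g(v)‖_∞ ≤ ℓ(G,H) · d_G(u,v) for all u, v ∈ V. -/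
lemma mcshane_ext {V : Type*} (G : SimpleGraph V) (hG : G.Connected) (A : Set V)
    [Finite A] [Nonempty A] (L : ℝ) (hL0 : 0 ≤ L) (f : A → ℝ)
    (hf : ∀ a b : A, f a - f b ≤ L * (G.dist (a : V) (b : V) : ℝ)) :
    ∃ g : V → ℝ, (∀ a : A, g (a : V) = f a) ∧
      ∀ u v : V, g u - g v ≤ L * (G.dist u v : ℝ) := by
  refine ⟨fun v => ⨅ a : A, f a + L * (G.dist (a : V) v : ℝ), ?_, ?_⟩
  · intro b
    apply le_antisymm
    · have h0 : (⨅ a : A, f a + L * (G.dist (a : V) (b : V) : ℝ)) ≤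
          f b + L * (G.dist (b : V) (b : V) : ℝ) :=
        ciInf_le (Set.Finite.bddBelow (Set.finite_range _)) b
      simpa [SimpleGraph.dist_self] using h0
    · refine le_ciInf fun a => ?_
      have h1 := hf b a
      rw [SimpleGraph.dist_comm] at h1
      linarith
  · intro u v
    have hbdd : BddBelow (Set.range fun a : A => f a + L * (G.dist (a : V) v : ℝ)) :=
      Set.Finite.bddBelow (Set.finite_range _)
    have step : (⨅ a : A, f a + L * (G.dist (a : V) u : ℝ)) - L * (G.dist u v : ℝ)
        ≤ ⨅ a : A, f a + L * (G.dist (a : V) v : ℝ) := by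
      refine le_ciInf fun a => ?_
      have tri : (G.dist (a : V) u : ℝ) ≤ (G.dist (a : V) v : ℝ) + (G.dist v u : ℝ) := by
        exact_mod_cast hG.dist_triangle
      have h2 : (⨅ a : A, f a + L * (G.dist (a : V) u : ℝ)) ≤
          f a + L * (G.dist (a : V) u : ℝ) :=
        ciInf_le (Set.Finite.bddBelow (Set.finite_range _)) a
      have h3 : L * (G.dist (a : V) u : ℝ) ≤
          L * (G.dist (a : V) v : ℝ) + L * (G.dist v u : ℝ) := by nlinarith
      have h4 : (G.dist v u : ℝ) = (G.dist u v : ℝ) := by rw [SimpleGraph.dist_comm]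
      rw [h4] at h3
      linarith
    linarith

/-- Embedding a graph into the plane with the `L∞` norm: if `G` is a
finite connected graph, `H` a cycle subgraph with anchor set `A = H.verts`,
`L = ℓ(G,H)` is the maximum of `d_H(u,v) / d_G(u,v)` over distinct anchors, and
`h : A → ℝ²` satisfies `‖h a − h b‖_∞ ≤ d_H(a,b)`, then `h` extends to a map
`g : V → ℝ²` with `‖g u − g v‖_∞ ≤ L · d_G(u,v)` for all `u, v`.
(The norm on `ℝ × ℝ` is the sup norm.) -/
theorem grid_embedding_exists {V : Type*} [Fintype V] (G : SimpleGraph V)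
    (hG : G.Connected) (H : G.Subgraph) (k : ℕ) (hk : 3 ≤ k)
    (hcyc : Nonempty (H.coe ≃g SimpleGraph.cycleGraph k))
    (L : ℝ)
    (hL : L = ⨆ p : {p : H.verts × H.verts // p.1 ≠ p.2},
        (H.coe.dist p.1.1 p.1.2 : ℝ) / (G.dist (p.1.1 : V) (p.1.2 : V) : ℝ))
    (h : H.verts → ℝ × ℝ)
    (hh : ∀ a b : H.verts, ‖h a - h b‖ ≤ (H.coe.dist a b : ℝ)) :
    ∃ g : V → ℝ × ℝ, (∀ a : H.verts, g (a : V) = h a) ∧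
      ∀ u v : V, ‖g u - g v‖ ≤ L * (G.dist u v : ℝ) := by
  obtain ⟨e⟩ := hcyc
  haveI : Finite H.verts := Subtype.finite
  have hne01 : (e.symm ⟨0, by omega⟩ : H.verts) ≠ e.symm ⟨1, by omega⟩ := by
    intro hc
    have := e.toEquiv.symm.injective hc
    simp [Fin.ext_iff] at this
  haveI hidx : Nonempty {p : H.verts × H.verts // p.1 ≠ p.2} :=
    ⟨⟨(_, _), hne01⟩⟩
  haveI : Nonempty H.verts := ⟨e.symm ⟨0, by omega⟩⟩
  have hbdd : BddAbove (Set.range fun p : {p : H.verts × H.verts // p.1 ≠ p.2} =>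
      (H.coe.dist p.1.1 p.1.2 : ℝ) / (G.dist (p.1.1 : V) (p.1.2 : V) : ℝ)) :=
    Set.Finite.bddAbove (Set.finite_range _)
  have hL0 : 0 ≤ L := by
    obtain ⟨p₀⟩ := hidx
    have h1 : (0 : ℝ) ≤ (H.coe.dist p₀.1.1 p₀.1.2 : ℝ) / (G.dist (p₀.1.1 : V) (p₀.1.2 : V) : ℝ) := by
      positivity
    have h2 := le_ciSup hbdd p₀
    rw [hL]; linarith
  have key : ∀ a b : H.verts, (H.coe.dist a b : ℝ) ≤ L * (G.dist (a : V) (b : V) : ℝ) := by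
    intro a b
    by_cases hab : a = b
    · subst hab; simp [SimpleGraph.dist_self]
    · have hdpos : 0 < G.dist (a : V) (b : V) :=
        hG.pos_dist_of_ne (Subtype.coe_injective.ne hab)
      have hdpos' : (0 : ℝ) < (G.dist (a : V) (b : V) : ℝ) := by exact_mod_cast hdpos
      have hle : (H.coe.dist a b : ℝ) / (G.dist (a : V) (b : V) : ℝ) ≤ L := by
        rw [hL]; exact le_ciSup hbdd ⟨(a, b), hab⟩
      rw [div_le_iff₀ hdpos'] at hle
      linarith
  have key1 : ∀ a b : H.verts, (h a).1 - (h b).1 ≤ L * (G.dist (a : V) (b : V) : ℝ) := by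
    intro a b
    have h1 : |(h a - h b).1| ≤ ‖h a - h b‖ := by
      calc |(h a - h b).1| = ‖(h a - h b).1‖ := (Real.norm_eq_abs _).symm
        _ ≤ ‖h a - h b‖ := norm_fst_le _
    have h2 := (hh a b).trans (key a b)
    have := abs_le.mp h1
    simp only [Prod.fst_sub] at this
    linarith [this.2]
  have key2 : ∀ a b : H.verts, (h a).2 - (h b).2 ≤ L * (G.dist (a : V) (b : V) : ℝ) := by
    intro a b
    have h1 : |(h a - h b).2| ≤ ‖h a - h b‖ := by
      calc |(h a - h b).2| = ‖(h a - h b).2‖ := (Real.norm_eq_abs _).symm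
        _ ≤ ‖h a - h b‖ := norm_snd_le _
    have h2 := (hh a b).trans (key a b)
    have := abs_le.mp h1
    simp only [Prod.snd_sub] at this
    linarith [this.2]
  obtain ⟨g₁, hg₁a, hg₁⟩ := mcshane_ext G hG H.verts L hL0 (fun a => (h a).1) key1
  obtain ⟨g₂, hg₂a, hg₂⟩ := mcshane_ext G hG H.verts L hL0 (fun a => (h a).2) key2
  refine ⟨fun v => (g₁ v, g₂ v), fun a => ?_, fun u v => ?_⟩
  · ext <;> simp [hg₁a a, hg₂a a]
  · have hd : (G.dist v u : ℝ) = (G.dist u v : ℝ) := by rw [SimpleGraph.dist_comm]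
    have b1 : |g₁ u - g₁ v| ≤ L * (G.dist u v : ℝ) :=
      abs_sub_le_iff.mpr ⟨hg₁ u v, by rw [← hd]; exact hg₁ v u⟩
    have b2 : |g₂ u - g₂ v| ≤ L * (G.dist u v : ℝ) :=
      abs_sub_le_iff.mpr ⟨hg₂ u v, by rw [← hd]; exact hg₂ v u⟩
    rw [Prod.norm_def]
    simp only [Prod.fst_sub, Prod.snd_sub, Real.norm_eq_abs]
    exact max_le b1 b2
end

section
/- Let a > 0 and let M = [0,a] × [0,a] ⊆ ℝ². Let c ∈ ℝ² satisfy ‖c − (a/2, a/2)‖_∞ ≤ a/4, let r > 0, and let D be the closed axis-aligned square of side length r centered at c, with D ⊆ M. For any point x ∈ M with x ≠ c, let π(x) denote the unique point of the boundary ∂M lying on the ray {c + t(x − c) : t ≥ 0}. Then for all x, y ∈ M not in the interior of D, the perimeter distance between π(x) and π(y) along ∂M is at most (40√2 · a / r) · ‖x − y‖_∞. -/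
/-!
Translate so that `c` is the origin: the square becomes a convex body `K` with
`ball 0 (a/4) ⊆ K ⊆ closedBall 0 (3a/4)`, and `π` becomes the radial projection
`v ↦ v / gauge K v`. The gauge is `4/a`-Lipschitz and, outside the ball of radius `r/2`, at
least `2r/(3a)`, so the radial projection is `6a/r`-Lipschitz there. Finally, two boundary points of
the square at sup-distance `d` are at most `2d` apart along the perimeter, which gives the
constant `12a/r ≤ 40√2·a/r`.
-/

open Metric Topology

/-- Arclength parametrization of the boundary of the square `[0,a] × [0,a]`,
starting at the origin and going counterclockwise; `t` ranges over `[0, 4a)`. -/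
noncomputable def sqParam (a t : ℝ) : ℝ × ℝ :=
  if t ≤ a then (t, 0)
  else if t ≤ 2 * a then (a, t - a)
  else if t ≤ 3 * a then (3 * a - t, a)
  else (0, 4 * a - t)

noncomputable def radialProj {E : Type*} [AddCommGroup E] [Module ℝ E] (K : Set E) (v : E) : E :=
  (gauge K v)⁻¹ • v

section radialProj

variable {E : Type*} [NormedAddCommGroup E] [NormedSpace ℝ E] {K : Set E}

theorem smul_eq_radialProj_of_smul_mem_frontier (hK : Convex ℝ K) (hK₀ : K ∈ 𝓝 0) {t : ℝ}
    (ht : 0 ≤ t) {v : E} (hv : t • v ∈ frontier K) : t • v = radialProj K v := by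
  have h : t * gauge K v = 1 := by
    rw [← smul_eq_mul, ← gauge_smul_of_nonneg ht]
    exact (gauge_eq_one_iff_mem_frontier hK hK₀).2 hv
  rw [radialProj, eq_inv_of_mul_eq_one_left h]

theorem norm_le_gauge_mul {R : ℝ} (hR : 0 < R) (hK : Absorbent ℝ K) (hKR : K ⊆ closedBall 0 R)
    (v : E) : ‖v‖ ≤ gauge K v * R :=
  (div_le_iff₀ hR).1 (le_gauge_of_subset_closedBall hK hR.le hKR)

theorem norm_radialProj_le {R : ℝ} (hR : 0 < R) (hK : Absorbent ℝ K) (hKR : K ⊆ closedBall 0 R)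
    (v : E) : ‖radialProj K v‖ ≤ R := by
  rw [radialProj, norm_smul, norm_inv, Real.norm_of_nonneg (gauge_nonneg v)]
  exact inv_mul_le_of_le_mul₀ (gauge_nonneg v) hR.le (norm_le_gauge_mul hR hK hKR v)

theorem gauge_smul_radialProj {R : ℝ} (hR : 0 < R) (hK : Absorbent ℝ K)
    (hKR : K ⊆ closedBall 0 R) (v : E) : gauge K v • radialProj K v = v := by
  rcases (gauge_nonneg (s := K) v).eq_or_lt with h | h
  · have : ‖v‖ ≤ 0 := by simpa [← h] using norm_le_gauge_mul hR hK hKR v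
    simp [norm_le_zero_iff.1 this]
  · rw [radialProj, smul_smul, mul_inv_cancel₀ h.ne', one_smul]

theorem norm_radialProj_sub_le {ρ R δ : ℝ} (hK : Convex ℝ K) (hρ : 0 < ρ) (hρK : ball 0 ρ ⊆ K)
    (hR : 0 < R) (hKR : K ⊆ closedBall 0 R) (hδ : 0 < δ) {v w : E} (hv : δ ≤ ‖v‖) :
    ‖radialProj K v - radialProj K w‖ ≤ R / δ * (1 + R / ρ) * ‖v - w‖ := by
  have hK₀ : Absorbent ℝ K := (absorbent_ball_zero hρ).mono hρK
  have hgv : δ / R ≤ gauge K v :=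
    (div_le_div_of_nonneg_right hv hR.le).trans (le_gauge_of_subset_closedBall hK₀ hR.le hKR)
  have hgv₀ : 0 < gauge K v := (div_pos hδ hR).trans_le hgv
  have hlip : |gauge K w - gauge K v| ≤ ‖v - w‖ / ρ := by
    have := (hK.lipschitzWith_gauge (r := ⟨ρ, hρ.le⟩) hρ hρK).dist_le_mul w v
    rw [dist_comm w, dist_eq_norm, dist_eq_norm] at this
    rwa [div_eq_inv_mul]
  have hdecomp : radialProj K v - radialProj K w =
      (gauge K v)⁻¹ • ((v - w) + (gauge K w - gauge K v) • radialProj K w) := by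
    rw [sub_smul, gauge_smul_radialProj hR hK₀ hKR, smul_add, smul_sub, smul_sub, smul_smul,
      inv_mul_cancel₀ hgv₀.ne', one_smul, radialProj]
    abel
  calc ‖radialProj K v - radialProj K w‖
      ≤ (gauge K v)⁻¹ * (‖v - w‖ + |gauge K w - gauge K v| * R) := by
        rw [hdecomp, norm_smul, norm_inv, Real.norm_of_nonneg hgv₀.le]
        gcongr
        refine (norm_add_le _ _).trans ?_
        rw [norm_smul, Real.norm_eq_abs]
        gcongr
        exact norm_radialProj_le hR hK₀ hKR w
    _ ≤ R / δ * (‖v - w‖ + ‖v - w‖ / ρ * R) := by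
        gcongr
        simpa only [inv_div] using inv_anti₀ (div_pos hδ hR) hgv
    _ = R / δ * (1 + R / ρ) * ‖v - w‖ := by ring

end radialProj

section closedBall

variable {E : Type*} [NormedAddCommGroup E] [NormedSpace ℝ E]

theorem sub_eq_radialProj_of_mem_frontier {M : Set E} (hM : Convex ℝ M) {c x p : E}
    (hc : M ∈ 𝓝 c) {s : ℝ} (hs : 0 ≤ s) (hp : p ∈ frontier M) (hpx : p = c + s • (x - c)) :
    p - c = radialProj ((c + ·) ⁻¹' M) (x - c) := by
  have hK₀ : (c + ·) ⁻¹' M ∈ 𝓝 0 :=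
    (continuous_const_add c).continuousAt.preimage_mem_nhds (by rwa [add_zero])
  have hfront : p - c ∈ frontier ((c + ·) ⁻¹' M) := by
    change p - c ∈ frontier (Homeomorph.addLeft c ⁻¹' M)
    rw [← Homeomorph.preimage_frontier]
    simpa using hp
  rw [hpx, add_sub_cancel_left] at hfront ⊢
  exact smul_eq_radialProj_of_smul_mem_frontier (hM.translate_preimage_right c) hK₀ hs hfront

theorem norm_sub_le_of_mem_frontier_closedBall {m c x y p q : E} {ρ δ s t : ℝ} (hρ : 0 < ρ)
    (hc : ‖c - m‖ ≤ ρ / 2) (hδ : 0 < δ) (hx : δ ≤ ‖x - c‖)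
    (hp : p ∈ frontier (closedBall m ρ)) (hs : 0 ≤ s) (hpx : p = c + s • (x - c))
    (hq : q ∈ frontier (closedBall m ρ)) (ht : 0 ≤ t) (hqy : q = c + t • (y - c)) :
    ‖p - q‖ ≤ 6 * ρ / δ * ‖x - y‖ := by
  set K := (c + ·) ⁻¹' closedBall m ρ
  have hball : ball 0 (ρ / 2) ⊆ K := fun v hv => by
    rw [mem_ball_zero_iff] at hv
    change dist (c + v) m ≤ ρ
    rw [dist_eq_norm, add_sub_right_comm]
    linarith [norm_add_le (c - m) v]
  have hKR : K ⊆ closedBall 0 (3 * ρ / 2) := fun v hv => by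
    change dist (c + v) m ≤ ρ at hv
    rw [dist_eq_norm] at hv
    have := norm_sub_le (c + v - m) (c - m)
    rw [show c + v - m - (c - m) = v by abel] at this
    rw [mem_closedBall_zero_iff]
    linarith
  have hcM : closedBall m ρ ∈ 𝓝 c :=
    Filter.mem_of_superset (ball_mem_nhds c (half_pos hρ)) fun z hz => by
      rw [mem_ball, dist_eq_norm] at hz
      rw [mem_closedBall, dist_eq_norm, ← sub_add_sub_cancel z c m]
      linarith [norm_add_le (z - c) (c - m)]
  have hpP := sub_eq_radialProj_of_mem_frontier (convex_closedBall m ρ) hcM hs hp hpx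
  have hqP := sub_eq_radialProj_of_mem_frontier (convex_closedBall m ρ) hcM ht hq hqy
  calc ‖p - q‖ = ‖radialProj K (x - c) - radialProj K (y - c)‖ := by
        rw [← hpP, ← hqP, sub_sub_sub_cancel_right]
    _ ≤ 3 * ρ / 2 / δ * (1 + 3 * ρ / 2 / (ρ / 2)) * ‖x - c - (y - c)‖ :=
        norm_radialProj_sub_le ((convex_closedBall m ρ).translate_preimage_right c)
          (half_pos hρ) hball (by positivity) hKR hδ hx
    _ = 6 * ρ / δ * ‖x - y‖ := by
        rw [sub_sub_sub_cancel_right]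
        field_simp
        ring

end closedBall

theorem Icc_zero_eq_closedBall (a : ℝ) :
    Set.Icc ((0 : ℝ), (0 : ℝ)) (a, a) = closedBall (a / 2, a / 2) (a / 2) := by
  rw [← closedBall_prod_same, Real.closedBall_eq_Icc, Set.Icc_prod_Icc, sub_self, add_halves]

theorem min_abs_sub_le_two_mul_norm_sqParam_sub {a s t : ℝ} (hs : s ∈ Set.Ico 0 (4 * a))
    (ht : t ∈ Set.Ico 0 (4 * a)) :
    min |s - t| (4 * a - |s - t|) ≤ 2 * ‖sqParam a s - sqParam a t‖ := by
  obtain ⟨hs₀, hs₁⟩ := hs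
  obtain ⟨ht₀, ht₁⟩ := ht
  have h₁ := abs_le.1 (norm_fst_le (sqParam a s - sqParam a t))
  have h₂ := abs_le.1 (norm_snd_le (sqParam a s - sqParam a t))
  have := min_le_left |s - t| (4 * a - |s - t|)
  have := min_le_right |s - t| (4 * a - |s - t|)
  generalize ‖sqParam a s - sqParam a t‖ = N at h₁ h₂ ⊢
  -- in each of the 32 cases below all quantities are affine in `s`, `t`, `a`, `N`
  simp only [sqParam, Prod.fst_sub, Prod.snd_sub] at h₁ h₂
  rcases abs_cases (s - t) with ⟨habs, -⟩ | ⟨habs, -⟩ <;>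
    split_ifs at h₁ h₂ <;> linarith [h₁.1, h₁.2, h₂.1, h₂.2]

theorem square_projection_stretch_general (a : ℝ) (ha : 0 < a)
    (c : ℝ × ℝ) (hc : ‖c - (a / 2, a / 2)‖ ≤ a / 4)
    (r : ℝ) (hr : 0 < r)
    (π : ℝ × ℝ → ℝ × ℝ)
    (hπ : ∀ x ∈ Set.Icc ((0 : ℝ), (0 : ℝ)) (a, a), x ≠ c →
      π x ∈ frontier (Set.Icc ((0 : ℝ), (0 : ℝ)) (a, a)) ∧
        ∃ t : ℝ, 0 ≤ t ∧ π x = c + t • (x - c)) :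
    ∀ x ∈ Set.Icc ((0 : ℝ), (0 : ℝ)) (a, a),
    ∀ y ∈ Set.Icc ((0 : ℝ), (0 : ℝ)) (a, a),
      x ∉ interior (Metric.closedBall c (r / 2)) →
      y ∉ interior (Metric.closedBall c (r / 2)) →
      ∀ s t : ℝ, s ∈ Set.Ico (0 : ℝ) (4 * a) → t ∈ Set.Ico (0 : ℝ) (4 * a) →
        sqParam a s = π x → sqParam a t = π y →
        min |s - t| (4 * a - |s - t|) ≤ (40 * Real.sqrt 2 * a / r) * ‖x - y‖ := by
  intro x hx y hy hxD hyD s t hs ht hsx hty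
  have far : ∀ z ∉ interior (closedBall c (r / 2)), r / 2 ≤ ‖z - c‖ ∧ z ≠ c := fun z hz => by
    rw [interior_closedBall', mem_ball, dist_eq_norm, not_lt] at hz
    exact ⟨hz, fun h => by rw [h, sub_self, norm_zero] at hz; linarith⟩
  obtain ⟨hxc, hxc'⟩ := far x hxD
  obtain ⟨hyc, hyc'⟩ := far y hyD
  obtain ⟨hpx, σ, hσ, hπx⟩ := hπ x hx hxc'
  obtain ⟨hqy, τ, hτ, hπy⟩ := hπ y hy hyc'
  rw [Icc_zero_eq_closedBall] at hpx hqy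
  have hchord : ‖π x - π y‖ ≤ 6 * (a / 2) / (r / 2) * ‖x - y‖ :=
    norm_sub_le_of_mem_frontier_closedBall (half_pos ha) (by linarith) (half_pos hr) hxc
      hpx hσ hπx hqy hτ hπy
  calc min |s - t| (4 * a - |s - t|) ≤ 2 * ‖π x - π y‖ := by
        rw [← hsx, ← hty]; exact min_abs_sub_le_two_mul_norm_sqParam_sub hs ht
    _ ≤ 2 * (6 * (a / 2) / (r / 2) * ‖x - y‖) := by gcongr
    _ = 12 * a / r * ‖x - y‖ := by ring
    _ ≤ 40 * Real.sqrt 2 * a / r * ‖x - y‖ := by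
        gcongr
        nlinarith [Real.one_lt_sqrt_two]

/-- Let `M = [0,a]²` (with the sup norm on `ℝ²`), let `D` be a closed
axis-aligned square of side `r` centered at `c`, where `c` is within `L∞` distance
`a/4` of the center of `M` and `D ⊆ M`.  For `x ∈ M`, `x ≠ c`, let `π x` be the unique
point of `∂M` on the ray from `c` through `x`.  Then for all `x, y ∈ M` not in the
interior of `D`, the perimeter distance along `∂M` between `π x` and `π y` is at most
`(40√2·a/r)·‖x − y‖_∞`.  The perimeter distance is expressed via the arclength
parametrization `sqParam a` of `∂M` (total length `4a`). -/
theorem square_projection_stretch (a : ℝ) (ha : 0 < a)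
    (c : ℝ × ℝ) (hc : ‖c - (a / 2, a / 2)‖ ≤ a / 4)
    (r : ℝ) (hr : 0 < r)
    (hD : Metric.closedBall c (r / 2) ⊆ Set.Icc ((0 : ℝ), (0 : ℝ)) (a, a))
    (π : ℝ × ℝ → ℝ × ℝ)
    (hπ : ∀ x ∈ Set.Icc ((0 : ℝ), (0 : ℝ)) (a, a), x ≠ c →
      π x ∈ frontier (Set.Icc ((0 : ℝ), (0 : ℝ)) (a, a)) ∧
        ∃ t : ℝ, 0 ≤ t ∧ π x = c + t • (x - c)) :
    ∀ x ∈ Set.Icc ((0 : ℝ), (0 : ℝ)) (a, a),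
    ∀ y ∈ Set.Icc ((0 : ℝ), (0 : ℝ)) (a, a),
      x ∉ interior (Metric.closedBall c (r / 2)) →
      y ∉ interior (Metric.closedBall c (r / 2)) →
      ∀ s t : ℝ, s ∈ Set.Ico (0 : ℝ) (4 * a) → t ∈ Set.Ico (0 : ℝ) (4 * a) →
        sqParam a s = π x → sqParam a t = π y →
        min |s - t| (4 * a - |s - t|) ≤ (40 * Real.sqrt 2 * a / r) * ‖x - y‖ :=
  square_projection_stretch_general a ha c hc r hr π hπ
end

section
/- There exists a constant c > 0 such that for every m ≥ 2, every retraction of the m×m grid graph to its boundary cycle has stretch at least c·m. (For the √n × √n grid on n vertices, the paper's bound is 2√n/3; in particular the optimal stretch is Ω(√n), even though the distance-based lower bound max_{u,v} d_H(u,v)/d_G(u,v) is O(1) for this instance.) -/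
/-- The `m × m` grid graph on `Fin m × Fin m`: two vertices are adjacent iff they agree
in one coordinate and differ by exactly 1 in the other. -/
def gridGraph (m : ℕ) : SimpleGraph (Fin m × Fin m) :=
  SimpleGraph.fromRel (fun u v =>
    (u.1 = v.1 ∧ u.2.val + 1 = v.2.val) ∨ (u.2 = v.2 ∧ u.1.val + 1 = v.1.val))

/-- The boundary of the `m × m` grid: the subgraph induced on the vertices having some
coordinate equal to `0` or `m − 1` (a cycle on `4(m−1)` vertices). -/
def gridBoundary (m : ℕ) : (gridGraph m).Subgraph :=
  (⊤ : (gridGraph m).Subgraph).induce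
    {v | v.1.val = 0 ∨ v.1.val = m - 1 ∨ v.2.val = 0 ∨ v.2.val = m - 1}

/-!
Unroll the boundary cycle of the `(n + 1) × (n + 1)` grid into `ZMod (4 * n)` by `boundaryPos`;
the boundary distance between two vertices is at least the circular distance `|valMinAbs|` of
their positions. If a retraction `f` had stretch `< n`, each grid edge would carry an integer
lift of the increment of `boundaryPos ∘ f` of size `< n`. Around a unit square these lifts sum
to a multiple of `4 * n` of size `< 4 * n`, hence to `0`; by a discrete Stokes formula they then
sum to `0` around the outer boundary too. But `f` fixes the boundary, which winds once around
the cycle, so that sum is `4 * n`.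
-/

open Finset

theorem sum_top_add_sum_right_eq_sum_left_add_sum_bottom {M : Type*} [AddCommGroup M]
    (a b : ℕ) (hor ver : ℕ → ℕ → M)
    (hsq : ∀ i < a, ∀ j < b, hor i j + ver i (j + 1) = ver i j + hor (i + 1) j) :
    ∑ j ∈ range b, hor 0 j + ∑ i ∈ range a, ver i b =
      ∑ i ∈ range a, ver i 0 + ∑ j ∈ range b, hor a j := by
  induction a with
  | zero => simp [add_comm]
  | succ a ih =>
    have hrow :
        ∑ j ∈ range b, hor (a + 1) j = ∑ j ∈ range b, hor a j + (ver a b - ver a 0) := by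
      rw [← sub_eq_iff_eq_add', ← sum_sub_distrib, ← sum_range_sub (ver a)]
      refine sum_congr rfl fun j hj => ?_
      rw [sub_eq_sub_iff_add_eq_add, add_comm (hor _ _), ← hsq a (by omega) j (mem_range.1 hj),
        add_comm]
    rw [sum_range_succ, sum_range_succ, ← add_assoc, ih fun i hi => hsq i (by omega), hrow]
    abel

lemma Int.eq_of_intCast_zmod_eq {N : ℕ} {a b : ℤ} (h : (a : ZMod N) = b)
    (hab : (a - b).natAbs < N) : a = b :=
  sub_eq_zero.1 <| Int.eq_zero_of_dvd_of_natAbs_lt_natAbs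
    ((ZMod.intCast_zmod_eq_zero_iff_dvd _ N).1 (by push_cast; rw [h, sub_self])) hab

lemma ZMod.natAbs_valMinAbs_intCast_le {N : ℕ} (a : ℤ) :
    (a : ZMod N).valMinAbs.natAbs ≤ a.natAbs := by
  rcases N with _ | N
  · rfl
  · exact natAbs_min_of_le_div_two _ _ _ (coe_valMinAbs _) (natAbs_valMinAbs_le _)

lemma ZMod.valMinAbs_add_valMinAbs_eq_of_add_eq {N k : ℕ} {a b c d : ZMod N} (h : a + b = c + d)
    (ha : a.valMinAbs.natAbs < k) (hb : b.valMinAbs.natAbs < k) (hc : c.valMinAbs.natAbs < k)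
    (hd : d.valMinAbs.natAbs < k) (hk : 4 * k ≤ N) :
    a.valMinAbs + b.valMinAbs = c.valMinAbs + d.valMinAbs :=
  Int.eq_of_intCast_zmod_eq (N := N) (by simp only [Int.cast_add, coe_valMinAbs, h]) (by omega)

theorem SimpleGraph.Walk.natAbs_valMinAbs_sub_le_length {V : Type*} {G : SimpleGraph V}
    {N : ℕ} {p : V → ZMod N} (hp : ∀ x y, G.Adj x y → (p y - p x).valMinAbs.natAbs ≤ 1)
    {x y : V} (w : G.Walk x y) : (p y - p x).valMinAbs.natAbs ≤ w.length := by
  induction w with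
  | nil => simp
  | @cons x z y h w ih =>
    calc (p y - p x).valMinAbs.natAbs
        = ((p y - p z) + (p z - p x)).valMinAbs.natAbs := by rw [sub_add_sub_cancel]
      _ ≤ ((p y - p z).valMinAbs + (p z - p x).valMinAbs).natAbs :=
        ZMod.natAbs_valMinAbs_add_le _ _
      _ ≤ (p y - p z).valMinAbs.natAbs + (p z - p x).valMinAbs.natAbs := Int.natAbs_add_le _ _
      _ ≤ (cons h w).length := by rw [length_cons]; have := hp x z h; omega

theorem SimpleGraph.Reachable.natAbs_valMinAbs_sub_le_dist {V : Type*} {G : SimpleGraph V}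
    {N : ℕ} {p : V → ZMod N} (hp : ∀ x y, G.Adj x y → (p y - p x).valMinAbs.natAbs ≤ 1)
    {x y : V} (h : G.Reachable x y) : (p y - p x).valMinAbs.natAbs ≤ G.dist x y := by
  obtain ⟨w, hw⟩ := h.exists_walk_length_eq_dist
  exact hw ▸ w.natAbs_valMinAbs_sub_le_length hp

theorem exists_le_natAbs_valMinAbs_sub_of_winding {n : ℕ} (hn : 0 < n)
    (G : ℕ → ℕ → ZMod (4 * n))
    (htop : ∀ j ≤ n, G 0 j = j) (hright : ∀ i ≤ n, G i n = n + i)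
    (hbot : ∀ j ≤ n, G n j = 3 * n - j) (hleft : ∀ i ≤ n, G i 0 = -i) :
    (∃ i < n, ∃ j ≤ n, n ≤ (G (i + 1) j - G i j).valMinAbs.natAbs) ∨
      ∃ i ≤ n, ∃ j < n, n ≤ (G i (j + 1) - G i j).valMinAbs.natAbs := by
  by_contra! hsmall
  obtain ⟨hver, hhor⟩ := hsmall
  set hor : ℕ → ℕ → ℤ := fun i j => (G i (j + 1) - G i j).valMinAbs
  set ver : ℕ → ℕ → ℤ := fun i j => (G (i + 1) j - G i j).valMinAbs
  have hsq : ∀ i < n, ∀ j < n, hor i j + ver i (j + 1) = ver i j + hor (i + 1) j :=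
    fun i hi j hj => ZMod.valMinAbs_add_valMinAbs_eq_of_add_eq (by ring) (hhor i hi.le j hj)
      (hver i hi (j + 1) hj) (hver i hi j hj.le) (hhor (i + 1) hi j hj) le_rfl
  have hunit : ∀ {d : ZMod (4 * n)} {e : ℤ}, e.natAbs = 1 → d = e →
      d.valMinAbs.natAbs < n → d.valMinAbs = e := fun he hd hlt =>
    Int.eq_of_intCast_zmod_eq (by rw [ZMod.coe_valMinAbs, hd]) (by omega)
  have htop' : ∀ j ∈ range n, hor 0 j = 1 := fun j hj => by
    rw [mem_range] at hj
    refine hunit (e := 1) rfl ?_ (hhor 0 hn.le j hj)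
    rw [htop _ hj, htop _ hj.le]; push_cast; ring
  have hright' : ∀ i ∈ range n, ver i n = 1 := fun i hi => by
    rw [mem_range] at hi
    refine hunit (e := 1) rfl ?_ (hver i hi n le_rfl)
    rw [hright _ hi, hright _ hi.le]; push_cast; ring
  have hbot' : ∀ j ∈ range n, hor n j = -1 := fun j hj => by
    rw [mem_range] at hj
    refine hunit (e := -1) rfl ?_ (hhor n le_rfl j hj)
    rw [hbot _ hj, hbot _ hj.le]; push_cast; ring
  have hleft' : ∀ i ∈ range n, ver i 0 = -1 := fun i hi => by
    rw [mem_range] at hi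
    refine hunit (e := -1) rfl ?_ (hver i hi 0 hn.le)
    rw [hleft _ hi, hleft _ hi.le]; push_cast; ring
  have hstokes := sum_top_add_sum_right_eq_sum_left_add_sum_bottom n n hor ver hsq
  simp only [sum_congr rfl htop', sum_congr rfl hright', sum_congr rfl hbot',
    sum_congr rfl hleft', sum_const, card_range, nsmul_eq_mul] at hstokes
  omega

/-- The position, along the boundary cycle walked clockwise from the corner `(0, 0)`, of a
boundary vertex of the `(n + 1) × (n + 1)` grid. -/
def boundaryPos (n : ℕ) (v : Fin (n + 1) × Fin (n + 1)) : ZMod (4 * n) :=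
  if v.1.val = 0 then v.2.val
  else if v.2.val = n then n + v.1.val
  else if v.1.val = n then 3 * n - v.2.val
  else -v.1.val

section boundaryPos

variable {n : ℕ} {v : Fin (n + 1) × Fin (n + 1)}

lemma boundaryPos_of_fst_eq_zero (h : v.1.val = 0) : boundaryPos n v = v.2.val := by
  simp [boundaryPos, h]

lemma boundaryPos_of_snd_eq_last (h : v.2.val = n) : boundaryPos n v = n + v.1.val := by
  unfold boundaryPos
  split_ifs with h0
  · rw [h0, h]; push_cast; ring
  · rfl

lemma boundaryPos_of_fst_eq_last (h : v.1.val = n) : boundaryPos n v = 3 * n - v.2.val := by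
  unfold boundaryPos
  split_ifs with h0 h1
  · obtain rfl : n = 0 := by omega
    simp
  · rw [h, h1]; ring
  · rfl

lemma boundaryPos_of_snd_eq_zero (h : v.2.val = 0) : boundaryPos n v = -v.1.val := by
  have h4n : (4 * n : ZMod (4 * n)) = 0 := by exact_mod_cast ZMod.natCast_self (4 * n)
  unfold boundaryPos
  split_ifs with h0 h1 h2
  · rw [h0, h]; simp
  · exact absurd (by omega) h0
  · rw [h2, h]; linear_combination h4n
  · rfl

end boundaryPos

lemma mem_gridBoundary_verts {n : ℕ} {v : Fin (n + 1) × Fin (n + 1)} :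
    v ∈ (gridBoundary (n + 1)).verts ↔
      v.1.val = 0 ∨ v.1.val = n ∨ v.2.val = 0 ∨ v.2.val = n :=
  Iff.rfl

lemma gridGraph_adj_of_rel {m : ℕ} {u v : Fin m × Fin m}
    (h : (u.1 = v.1 ∧ u.2.val + 1 = v.2.val) ∨ (u.2 = v.2 ∧ u.1.val + 1 = v.1.val)) :
    (gridGraph m).Adj u v := by
  refine (SimpleGraph.fromRel_adj _ _ _).2 ⟨?_, Or.inl h⟩
  rintro rfl
  omega

section gridBoundary

variable {n : ℕ}

lemma boundaryPos_sub_of_rel {u v : Fin (n + 1) × Fin (n + 1)}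
    (hu : u ∈ (gridBoundary (n + 1)).verts) (hv : v ∈ (gridBoundary (n + 1)).verts)
    (h : (u.1 = v.1 ∧ u.2.val + 1 = v.2.val) ∨ (u.2 = v.2 ∧ u.1.val + 1 = v.1.val)) :
    boundaryPos n v - boundaryPos n u = 1 ∨ boundaryPos n v - boundaryPos n u = -1 := by
  rw [mem_gridBoundary_verts] at hu hv
  rcases h with ⟨h1, h2⟩ | ⟨h1, h2⟩
  · rw [← h1, ← h2] at hv
    rcases (by omega : u.1.val = 0 ∨ u.1.val = n) with h0 | hn
    · rw [boundaryPos_of_fst_eq_zero h0, boundaryPos_of_fst_eq_zero (h1 ▸ h0), ← h2]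
      left; push_cast; ring
    · rw [boundaryPos_of_fst_eq_last hn, boundaryPos_of_fst_eq_last (h1 ▸ hn), ← h2]
      right; push_cast; ring
  · rw [← h1, ← h2] at hv
    rcases (by omega : u.2.val = 0 ∨ u.2.val = n) with h0 | hn
    · rw [boundaryPos_of_snd_eq_zero h0, boundaryPos_of_snd_eq_zero (h1 ▸ h0), ← h2]
      right; push_cast; ring
    · rw [boundaryPos_of_snd_eq_last hn, boundaryPos_of_snd_eq_last (h1 ▸ hn), ← h2]
      left; push_cast; ring

lemma natAbs_valMinAbs_boundaryPos_sub_le_one {u v : Fin (n + 1) × Fin (n + 1)}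
    (h : (gridBoundary (n + 1)).Adj u v) :
    (boundaryPos n v - boundaryPos n u).valMinAbs.natAbs ≤ 1 := by
  obtain ⟨hu, hv, hadj⟩ := h
  have hadj : (gridGraph (n + 1)).Adj u v := hadj
  obtain ⟨-, hrel⟩ := (SimpleGraph.fromRel_adj _ _ _).1 hadj
  have hstep : ∀ x : ZMod (4 * n), x = 1 ∨ x = -1 → x.valMinAbs.natAbs ≤ 1 := by
    rintro x (rfl | rfl)
    · exact_mod_cast ZMod.natAbs_valMinAbs_intCast_le (N := 4 * n) 1
    · exact_mod_cast ZMod.natAbs_valMinAbs_intCast_le (N := 4 * n) (-1)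
  rcases hrel with hrel | hrel
  · exact hstep _ (boundaryPos_sub_of_rel hu hv hrel)
  · rw [← neg_sub, ZMod.natAbs_valMinAbs_neg]
    exact hstep _ (boundaryPos_sub_of_rel hv hu hrel)

lemma gridBoundary_reachable_of_adj {x y : Fin (n + 1) × Fin (n + 1)}
    (hx : x ∈ (gridBoundary (n + 1)).verts) (hy : y ∈ (gridBoundary (n + 1)).verts)
    (h : (gridGraph (n + 1)).Adj x y) :
    (gridBoundary (n + 1)).coe.Reachable ⟨x, hx⟩ ⟨y, hy⟩ :=
  SimpleGraph.Adj.reachable ⟨hx, hy, h⟩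

lemma gridBoundary_reachable_along_row (i : Fin (n + 1)) (hi : i.val = 0 ∨ i.val = n)
    (j : Fin (n + 1)) :
    (gridBoundary (n + 1)).coe.Reachable
      ⟨(i, 0), mem_gridBoundary_verts.2 (hi.imp_right Or.inl)⟩
      ⟨(i, j), mem_gridBoundary_verts.2 (hi.imp_right Or.inl)⟩ := by
  induction j using Fin.induction with
  | zero => rfl
  | succ j ih => exact ih.trans (gridBoundary_reachable_of_adj _ _
      (gridGraph_adj_of_rel (Or.inl ⟨rfl, by simp⟩)))

lemma gridBoundary_reachable_along_col (j : Fin (n + 1)) (hj : j.val = 0 ∨ j.val = n)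
    (i : Fin (n + 1)) :
    (gridBoundary (n + 1)).coe.Reachable
      ⟨(0, j), mem_gridBoundary_verts.2 (Or.inr (Or.inr hj))⟩
      ⟨(i, j), mem_gridBoundary_verts.2 (Or.inr (Or.inr hj))⟩ := by
  induction i using Fin.induction with
  | zero => rfl
  | succ i ih => exact ih.trans (gridBoundary_reachable_of_adj _ _
      (gridGraph_adj_of_rel (Or.inr ⟨rfl, by simp⟩)))

lemma gridBoundary_preconnected : (gridBoundary (n + 1)).coe.Preconnected := by
  suffices h : ∀ x, (gridBoundary (n + 1)).coe.Reachable ⟨(0, 0), Or.inl rfl⟩ x from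
    fun x y => (h x).symm.trans (h y)
  rintro ⟨⟨i, j⟩, hi | hi | hj | hj⟩
  · obtain rfl : i = 0 := Fin.ext hi
    exact gridBoundary_reachable_along_row 0 (Or.inl rfl) j
  · exact (gridBoundary_reachable_along_col 0 (Or.inl rfl) i).trans
      (gridBoundary_reachable_along_row i (Or.inr hi) j)
  · obtain rfl : j = 0 := Fin.ext hj
    exact gridBoundary_reachable_along_col 0 (Or.inl rfl) i
  · exact (gridBoundary_reachable_along_row 0 (Or.inl rfl) j).trans
      (gridBoundary_reachable_along_col j (Or.inr hj) i)

end gridBoundary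

open Fin.NatCast in
theorem exists_gridGraph_adj_le_natAbs_valMinAbs_sub {n : ℕ} (hn : 0 < n)
    (g : Fin (n + 1) × Fin (n + 1) → ZMod (4 * n))
    (hg : ∀ v ∈ (gridBoundary (n + 1)).verts, g v = boundaryPos n v) :
    ∃ u v, (gridGraph (n + 1)).Adj u v ∧ n ≤ (g v - g u).valMinAbs.natAbs := by
  have hval : ∀ {k : ℕ}, k ≤ n → (k : Fin (n + 1)).val = k :=
    fun hk => Fin.val_cast_of_lt (by omega)
  have htop : ∀ j ≤ n, g (0, j) = j := fun j hj => by
    rw [hg _ (Or.inl (by simp)), boundaryPos_of_fst_eq_zero (by simp), hval hj]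
  have hright : ∀ i ≤ n, g (i, n) = n + i := fun i hi => by
    rw [hg _ (Or.inr (Or.inr (Or.inr (hval le_rfl)))), boundaryPos_of_snd_eq_last (hval le_rfl),
      hval hi]
  have hbot : ∀ j ≤ n, g (n, j) = 3 * n - j := fun j hj => by
    rw [hg _ (Or.inr (Or.inl (hval le_rfl))), boundaryPos_of_fst_eq_last (hval le_rfl), hval hj]
  have hleft : ∀ i ≤ n, g (i, 0) = -i := fun i hi => by
    rw [hg _ (Or.inr (Or.inr (Or.inl (by simp)))), boundaryPos_of_snd_eq_zero (by simp), hval hi]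
  rcases exists_le_natAbs_valMinAbs_sub_of_winding hn (fun i j : ℕ => g (i, j)) htop hright hbot
    hleft with ⟨i, hi, j, -, hij⟩ | ⟨i, -, j, hj, hij⟩
  · refine ⟨_, _, ?_, hij⟩
    exact gridGraph_adj_of_rel (Or.inr ⟨rfl, by rw [hval hi.le, hval hi]⟩)
  · refine ⟨_, _, ?_, hij⟩
    exact gridGraph_adj_of_rel (Or.inl ⟨rfl, by rw [hval hj.le, hval hj]⟩)

theorem exists_gridGraph_adj_le_dist_of_retraction {n : ℕ} (hn : 0 < n)
    (f : Fin (n + 1) × Fin (n + 1) → (gridBoundary (n + 1)).verts)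
    (hf : ∀ a : (gridBoundary (n + 1)).verts, f a = a) :
    ∃ u v, (gridGraph (n + 1)).Adj u v ∧ n ≤ (gridBoundary (n + 1)).coe.dist (f u) (f v) := by
  obtain ⟨u, v, huv, hlarge⟩ := exists_gridGraph_adj_le_natAbs_valMinAbs_sub hn
    (fun w => boundaryPos n (f w)) fun w hw => by rw [hf ⟨w, hw⟩]
  refine ⟨u, v, huv, hlarge.trans ?_⟩
  exact (gridBoundary_preconnected (f u) (f v)).natAbs_valMinAbs_sub_le_dist
    (G := (gridBoundary (n + 1)).coe) (p := fun w => boundaryPos n w)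
    fun _ _ h => natAbs_valMinAbs_boundaryPos_sub_le_one h

/-- There is a constant `c > 0` such that for all `m ≥ 2`, every
retraction of the `m × m` grid graph to its boundary cycle has stretch at least `c·m`:
some edge of the grid is mapped to two boundary vertices at boundary distance
at least `c·m`. -/
theorem grid_retraction_lower_bound :
    ∃ c : ℝ, 0 < c ∧
      ∀ m : ℕ, 2 ≤ m →
        ∀ f : Fin m × Fin m → (gridBoundary m).verts,
          (∀ a : (gridBoundary m).verts, f (a : Fin m × Fin m) = a) →
          ∃ u v : Fin m × Fin m, (gridGraph m).Adj u v ∧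
            c * (m : ℝ) ≤ ((gridBoundary m).coe.dist (f u) (f v) : ℝ) := by
  refine ⟨1 / 2, by norm_num, fun m hm f hf => ?_⟩
  obtain ⟨n, rfl⟩ : ∃ n, m = n + 1 := ⟨m - 1, by omega⟩
  obtain ⟨u, v, huv, hdist⟩ := exists_gridGraph_adj_le_dist_of_retraction (by omega) f hf
  refine ⟨u, v, huv, ?_⟩
  have hn : (1 : ℝ) ≤ n := by exact_mod_cast (by omega : 1 ≤ n)
  have : (n : ℝ) ≤ (gridBoundary (n + 1)).coe.dist (f u) (f v) := by exact_mod_cast hdist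
  push_cast
  linarith
end

section
/- Let G be a finite simple graph and H a cycle subgraph of G whose vertices are a₀, a₁, …, a_{k−1} in cyclic order (k ≥ 3, with edges {a_i, a_{i+1 mod k}}). Fix an orientation of each edge of G such that every edge of H is oriented forward along the cycle (a_i → a_{i+1 mod k}). Suppose there exists a retraction f of G to H with stretch at most s, where s ≥ 1. Then there exists a real-valued assignment x on the oriented edges of G such that: (i) x(e) = 1 for every forward-oriented edge of H; and (ii) for every cycle C of G with fewer than k/s edges, traversed in either direction, the sum of x(e) over edges of C traversed in their chosen orientation minus the sum of x(e) over edges of C traversed against their orientation equals 0. (That is, the linear program LP_{k/s} is feasible.) -/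
lemma walk_dart_telescope {V : Type*} {G : SimpleGraph V} {k : ℕ} (f : V → ZMod k)
    {u v : V} (p : G.Walk u v) :
    (p.darts.map (fun d => f d.toProd.2 - f d.toProd.1)).sum = f v - f u := by
  induction p with
  | nil => simp
  | cons h p ih => simp only [SimpleGraph.Walk.darts_cons, List.map_cons, List.sum_cons, ih]; ring

lemma list_if_sum_eq {α : Type*} (P : α → Prop) [DecidablePred P] (g : α → ℤ)
    (l : List α) (h : ∀ d ∈ l, ¬ P d) :
    (l.map (fun d => if P d then (0:ℝ) else (g d : ℝ))).sum =
      ((l.map g).sum : ℝ) := by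
  induction l with
  | nil => simp
  | cons d t ih =>
      simp only [List.map_cons, List.sum_cons, if_neg (h d (by simp))]
      rw [ih (fun x hx => h x (by simp [hx]))]
      push_cast; ring

lemma list_sum_natAbs_le {α : Type*} (g : α → ℤ) (s : ℕ) (l : List α)
    (h : ∀ d ∈ l, (g d).natAbs ≤ s) :
    ((l.map g).sum).natAbs ≤ s * l.length := by
  induction l with
  | nil => simp
  | cons d t ih =>
      simp only [List.map_cons, List.sum_cons, List.length_cons]
      have h1 := h d (by simp)
      have h2 := ih (fun x hx => h x (by simp [hx]))
      calc (g d + (t.map g).sum).natAbs ≤ (g d).natAbs + ((t.map g).sum).natAbs :=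
            Int.natAbs_add_le _ _
        _ ≤ s * (t.length + 1) := by
            have : s * (t.length + 1) = s * t.length + s := by ring
            omega

/-- Let `H` be a cycle subgraph of `G` with vertices `a i` (`i : ZMod k`,
`k ≥ 3`) in cyclic order, and suppose `G` retracts to `H` with stretch at most `s ≥ 1`
(the retraction is recorded by the cyclic position `f : V → ZMod k` of the image of
each vertex, so that the stretch of an edge `{u,v}` is the cycle distance
`|(f v − f u).valMinAbs|`).  Then the linear program `LP_{k/s}` is feasible: there is a
skew-symmetric edge assignment `x` (its values on the two orientations of an edge are
negatives of one another, so `x` encodes an assignment on oriented edges) with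
`x = 1` on the forward-oriented edges of `H`, and summing to `0` along every cycle of
`G` with fewer than `k/s` edges, traversed in either direction. -/
theorem lp_feasible_of_retraction {V : Type*} [Fintype V] (G : SimpleGraph V)
    (k : ℕ) (hk : 3 ≤ k) (a : ZMod k → V) (ha : Function.Injective a)
    (hadj : ∀ i : ZMod k, G.Adj (a i) (a (i + 1)))
    (s : ℕ) (hs : 1 ≤ s)
    (f : V → ZMod k) (hfix : ∀ i : ZMod k, f (a i) = i)
    (hstretch : ∀ u v : V, G.Adj u v → ((f v - f u).valMinAbs).natAbs ≤ s) :
    ∃ x : V → V → ℝ,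
      (∀ u v : V, x u v = - x v u) ∧
      (∀ i : ZMod k, x (a i) (a (i + 1)) = 1) ∧
      (∀ (v : V) (c : G.Walk v v), c.IsCycle → (c.length : ℝ) < (k : ℝ) / (s : ℝ) →
        (c.darts.map (fun d => x d.toProd.1 d.toProd.2)).sum = 0) := by
  haveI : NeZero k := ⟨by omega⟩
  refine ⟨fun u v => if 2 * (f v - f u).val = k then 0 else ((f v - f u).valMinAbs : ℝ),
    ?_, ?_, ?_⟩
  · intro u v
    dsimp only
    have hneg : f u - f v = -(f v - f u) := by ring
    rw [hneg]
    by_cases h0 : f v - f u = 0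
    · rw [h0]
      simp only [neg_zero, ZMod.val_zero, mul_zero, ZMod.valMinAbs_zero]
      rw [if_neg (by omega)]
      norm_num
    · have hval : (-(f v - f u)).val = k - (f v - f u).val := by
        rw [ZMod.neg_val]; simp [h0]
      have hvpos : 0 < (f v - f u).val :=
        Nat.pos_of_ne_zero (fun h => h0 ((ZMod.val_eq_zero (f v - f u)).mp h))
      have hvlt : (f v - f u).val < k := ZMod.val_lt _
      by_cases hh : 2 * (f v - f u).val = k
      · have h2 : 2 * (-(f v - f u)).val = k := by omega
        rw [if_pos hh, if_pos h2]; norm_num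
      · have hh' : 2 * (-(f v - f u)).val ≠ k := by omega
        rw [if_neg hh, if_neg hh', ZMod.valMinAbs_neg_of_ne_half hh]
        push_cast; ring
  · intro i
    dsimp only
    have h1 : f (a (i + 1)) - f (a i) = 1 := by rw [hfix, hfix]; ring
    rw [h1]
    have hv1 : (1 : ZMod k).val = 1 := by
      rw [ZMod.val_one_eq_one_mod]; exact Nat.mod_eq_of_lt (by omega)
    have hmin : (1 : ZMod k).valMinAbs = 1 := by
      rw [ZMod.valMinAbs_def_pos, if_pos (by omega), hv1]; norm_num
    rw [if_neg (by omega), hmin]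
    norm_num
  · intro v c hc hlen
    have hlen3 : 3 ≤ c.length := hc.three_le_length
    have hspos : (0:ℝ) < s := by exact_mod_cast hs
    have hsl : (s : ℝ) * c.length < k := by
      rw [mul_comm, ← lt_div_iff₀ hspos]; exact hlen
    have hsl' : s * c.length < k := by exact_mod_cast hsl
    have hdartlen : c.darts.length = c.length := SimpleGraph.Walk.length_darts c
    -- each dart: bound and the `if` never fires
    have hdart : ∀ d ∈ c.darts,
        (f d.toProd.2 - f d.toProd.1).valMinAbs.natAbs ≤ s := by
      intro d hd
      exact hstretch _ _ d.adj
    have hdart2 : ∀ d ∈ c.darts, ¬ (2 * (f d.toProd.2 - f d.toProd.1).val = k) := by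
      intro d hd hhalf
      have hb := hdart d hd
      set z := f d.toProd.2 - f d.toProd.1
      have hzval : z.val ≤ k / 2 := by omega
      have hmin : z.valMinAbs = z.val := by
        rw [ZMod.valMinAbs_def_pos, if_pos hzval]
      have hnat : z.valMinAbs.natAbs = z.val := by rw [hmin]; exact Int.natAbs_natCast _
      -- k = 2 * z.val ≤ 2 * s, but 3 ≤ length so 3*s ≤ s*length < k
      have : 3 * s ≤ s * c.length := by nlinarith
      omega
    -- flip the darts so it matches the goal orientation
    have hgoal : (c.darts.map (fun d =>
        if 2 * (f d.toProd.2 - f d.toProd.1).val = k then (0:ℝ)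
        else ((f d.toProd.2 - f d.toProd.1).valMinAbs : ℝ))).sum = 0 := by
      rw [list_if_sum_eq (fun d => 2 * (f d.toProd.2 - f d.toProd.1).val = k)
        (fun d => (f d.toProd.2 - f d.toProd.1).valMinAbs) c.darts hdart2]
      set S : ℤ := (c.darts.map (fun d => (f d.toProd.2 - f d.toProd.1).valMinAbs)).sum with hS
      have hcast : ((S : ℤ) : ZMod k) = 0 := by
        rw [hS]
        push_cast
        rw [List.map_map]
        have : ((fun n : ℤ => (n : ZMod k)) ∘ fun d : G.Dart =>
            (f d.toProd.2 - f d.toProd.1).valMinAbs) =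
            fun d : G.Dart => f d.toProd.2 - f d.toProd.1 := by
          funext d
          simp [ZMod.coe_valMinAbs]
        rw [this, walk_dart_telescope f c]
        simp
      have hdvd : (k : ℤ) ∣ S := (ZMod.intCast_zmod_eq_zero_iff_dvd S k).mp hcast
      have habs : S.natAbs ≤ s * c.length := by
        have := list_sum_natAbs_le (fun d => (f d.toProd.2 - f d.toProd.1).valMinAbs)
          s c.darts hdart
        rwa [hdartlen] at this
      have hS0 : S = 0 := by
        rcases hdvd with ⟨m, hm⟩
        have : S.natAbs < k := by omega
        rw [hm] at this ⊢
        have hk0 : 0 < (k:ℤ) := by exact_mod_cast (by omega : 0 < k)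
        rcases eq_or_ne m 0 with rfl | hm0
        · simp
        · exfalso
          have hmna : 1 ≤ m.natAbs := Nat.one_le_iff_ne_zero.mpr (Int.natAbs_ne_zero.mpr hm0)
          have heq : ((k:ℤ) * m).natAbs = k * m.natAbs := by
            rw [Int.natAbs_mul, Int.natAbs_natCast]
          have hk2 : k ≤ k * m.natAbs := Nat.le_mul_of_pos_right k hmna
          exact absurd (heq ▸ this) (not_lt.mpr hk2)
      rw [hS0]; simp
    exact hgoal
end

section
/- Let G be a simple graph, H a subgraph of G, and v a vertex of G. Let C be a connected component of the induced subgraph G − v (obtained by deleting v) that contains no vertex of H, and let G' be the induced subgraph of G on V(G) ∖ V(C) (so H is a subgraph of G'). Then G admits a stretch-1 retraction to H if and only if G' admits a stretch-1 retraction to H. (Consequently, in deciding the existence of a stretch-1 retraction one may assume G is 2-vertex-connected.) -/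
/-- Let `H` be a subgraph of `G`, let `v` be a vertex, and let `S` be
the vertex set of a connected component of `G − v` (so `S` is nonempty, connected in
the induced graph, and every neighbor of a vertex of `S` is `v` or in `S`) containing
no vertex of `H`.  Then `G` admits a stretch-1 retraction to `H` if and only if the
induced subgraph `G'` of `G` on `V ∖ S` admits a stretch-1 retraction to `H`. -/
theorem stretch_one_retraction_remove_component {V : Type*} (G : SimpleGraph V)
    (H : G.Subgraph) (v : V) (S : Set V)
    (hvS : v ∉ S) (hSne : S.Nonempty)
    (hconn : (G.induce S).Connected)
    (hclosed : ∀ u ∈ S, ∀ w : V, G.Adj u w → w = v ∨ w ∈ S)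
    (hSH : ∀ u ∈ S, u ∉ H.verts) :
    (∃ f : V → H.verts,
        (∀ (a : V) (ha : a ∈ H.verts), f a = ⟨a, ha⟩) ∧
        ∀ u w : V, G.Adj u w → f u = f w ∨ H.Adj (f u : V) (f w : V)) ↔
    (∃ g : {u : V // u ∉ S} → H.verts,
        (∀ (a : V) (ha : a ∈ H.verts) (hb : a ∉ S), g ⟨a, hb⟩ = ⟨a, ha⟩) ∧
        ∀ u w : {u : V // u ∉ S}, G.Adj (u : V) (w : V) →
          g u = g w ∨ H.Adj (g u : V) (g w : V)) := by
  constructor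
  · rintro ⟨f, hret, hedge⟩
    exact ⟨fun u => f u, fun a ha hb => hret a ha, fun u w h => hedge u w h⟩
  · rintro ⟨g, hret, hedge⟩
    classical
    refine ⟨fun u => if h : u ∈ S then g ⟨v, hvS⟩ else g ⟨u, h⟩, ?_, ?_⟩
    · intro a ha
      have hb : a ∉ S := fun hs => hSH a hs ha
      simp [hb, hret a ha]
    · intro u w h
      by_cases hu : u ∈ S <;> by_cases hw : w ∈ S
      · simp [hu, hw]
      · rcases hclosed u hu w h with rfl | hws
        · simp [hu, hw]
        · exact absurd hws hw
      · rcases hclosed w hw u h.symm with rfl | hus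
        · simp [hu, hw]
        · exact absurd hus hu
      · simpa [hu, hw] using hedge ⟨u, hu⟩ ⟨w, hw⟩ h
end

section
/- For m ≥ 2, let G be the graph on vertex set {0,…,m−1} × {0,…,m−1} whose edges are all horizontal edges {(i,j), (i,j+1)} (for 0 ≤ i ≤ m−1, 0 ≤ j ≤ m−2) together with the vertical edges {(i,0), (i+1,0)} and {(i,m−1), (i+1,m−1)} on the two boundary columns (the m×m grid with all interior column edges removed), and let H be its boundary cycle, i.e., the subgraph induced on the vertices having some coordinate equal to 0 or m−1. Then there exists a retraction of G to H with stretch at most 2. -/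
/-- The `m × m` grid graph with all interior column edges removed: vertex `(i, j)` has
all horizontal edges `{(i,j), (i,j+1)}`, but vertical edges `{(i,j), (i+1,j)}` only in
the two boundary columns `j = 0` and `j = m − 1`. -/
def rowGridGraph (m : ℕ) : SimpleGraph (Fin m × Fin m) :=
  SimpleGraph.fromRel (fun u v =>
    (u.1 = v.1 ∧ u.2.val + 1 = v.2.val) ∨
    (u.2 = v.2 ∧ (u.2.val = 0 ∨ u.2.val = m - 1) ∧ u.1.val + 1 = v.1.val))

/-- The boundary cycle: the subgraph induced on the vertices having some coordinate
equal to `0` or `m − 1` (a cycle on `4(m−1)` vertices). -/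
def rowGridBoundary (m : ℕ) : (rowGridGraph m).Subgraph :=
  (⊤ : (rowGridGraph m).Subgraph).induce
    {v | v.1.val = 0 ∨ v.1.val = m - 1 ∨ v.2.val = 0 ∨ v.2.val = m - 1}


/-- Point at position `p` along the boundary route from `(a,0)` up the left
column, across the top row, and down the right column (in an `(n+1)×(n+1)` grid,
0-indexed coordinates up to `n`). -/
def bpt (n a p : ℕ) : ℕ × ℕ :=
  if p ≤ a then (a - p, 0) else if p ≤ a + n then (0, p - a) else (p - a - n, n)

/-- Route position assigned to column `j` in the row at top-margin `a`. -/
def bg (n a j : ℕ) : ℕ := j + min j a + (a - (n - j))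

/-- Pattern-level adjacency of the boundary cycle. -/
def bA (n : ℕ) (p q : ℕ × ℕ) : Prop :=
  (p.1 = q.1 ∧ (p.2 + 1 = q.2 ∨ q.2 + 1 = p.2)) ∨
  (p.2 = q.2 ∧ (p.2 = 0 ∨ p.2 = n) ∧ (p.1 + 1 = q.1 ∨ q.1 + 1 = p.1))

/-- Pattern-level membership in the boundary with coordinates in range. -/
def bOK (n : ℕ) (p : ℕ × ℕ) : Prop :=
  p.1 ≤ n ∧ p.2 ≤ n ∧ (p.1 = 0 ∨ p.1 = n ∨ p.2 = 0 ∨ p.2 = n)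

lemma bpt_ok (n a p : ℕ) (ha : 2 * a ≤ n) (hp : p ≤ n + 2 * a) :
    bOK n (bpt n a p) := by
  unfold bpt bOK; split_ifs <;> simp <;> omega

lemma bpt_adj (n a p : ℕ) (hn : 1 ≤ n) (ha : 2 * a ≤ n) (hp : p < n + 2 * a) :
    bA n (bpt n a p) (bpt n a (p + 1)) := by
  unfold bpt bA; split_ifs <;> simp <;> omega

lemma bg_zero (n a : ℕ) (ha : a ≤ n) : bg n a 0 = 0 := by unfold bg; omega

lemma bg_last (n a : ℕ) (ha : a ≤ n) : bg n a n = n + 2 * a := by unfold bg; omega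

lemma bg_step (n a j : ℕ) (ha : 2 * a ≤ n) (hj : j < n) :
    (bg n a (j + 1) = bg n a j + 1 ∨ bg n a (j + 1) = bg n a j + 2) ∧
      bg n a (j + 1) ≤ n + 2 * a := by
  unfold bg; omega

/-- The retraction at the pattern level. -/
def bP (n i j : ℕ) : ℕ × ℕ :=
  if 2 * i ≤ n then bpt n i (bg n i j)
  else ((n - (bpt n (n - i) (bg n (n - i) j)).1, (bpt n (n - i) (bg n (n - i) j)).2))

lemma bA_flip (n : ℕ) (p q : ℕ × ℕ) (hp : p.1 ≤ n) (hq : q.1 ≤ n) (h : bA n p q) :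
    bA n (n - p.1, p.2) (n - q.1, q.2) := by
  unfold bA at *; simp at *; omega

lemma bOK_flip (n : ℕ) (p : ℕ × ℕ) (h : bOK n p) : bOK n (n - p.1, p.2) := by
  unfold bOK at *; simp at *; omega

lemma bP_ok (n i j : ℕ) (hi : i ≤ n) (hj : j ≤ n) : bOK n (bP n i j) := by
  unfold bP
  split_ifs with h
  · exact bpt_ok n i _ h (by have := bg_step n i; unfold bg; omega)
  · exact bOK_flip n _ (bpt_ok n (n - i) _ (by omega) (by unfold bg; omega))

lemma bP_fixed (n i j : ℕ) (hn : 1 ≤ n) (hi : i ≤ n) (hj : j ≤ n)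
    (h : i = 0 ∨ i = n ∨ j = 0 ∨ j = n) : bP n i j = (i, j) := by
  unfold bP bpt bg
  split_ifs <;> simp <;> omega

lemma bP_step (n i j : ℕ) (hn : 1 ≤ n) (hi : i ≤ n) (hj : j < n) :
    bP n i j = bP n i (j + 1) ∨ bA n (bP n i j) (bP n i (j + 1)) ∨
      ∃ w, bOK n w ∧ bA n (bP n i j) w ∧ bA n w (bP n i (j + 1)) := by
  unfold bP
  split_ifs with h
  · -- top half, margin a = i
    obtain ⟨hstep, hle⟩ := bg_step n i j h hj
    rcases hstep with h1 | h2
    · right; left; rw [h1]; exact bpt_adj n i _ hn h (by omega)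
    · right; right
      refine ⟨bpt n i (bg n i j + 1), bpt_ok n i _ h (by omega), bpt_adj n i _ hn h (by omega), ?_⟩
      rw [h2]; exact bpt_adj n i _ hn h (by omega)
  · -- bottom half, margin a = n - i, flipped
    set a := n - i with hadef
    have ha : 2 * a ≤ n := by omega
    obtain ⟨hstep, hle⟩ := bg_step n a j ha hj
    rcases hstep with h1 | h2
    · right; left
      rw [h1]
      exact bA_flip n _ _ (bpt_ok n a _ ha (by omega)).1 (bpt_ok n a _ ha (by omega)).1
        (bpt_adj n a _ hn ha (by omega))
    · right; right
      refine ⟨(n - (bpt n a (bg n a j + 1)).1, (bpt n a (bg n a j + 1)).2),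
        bOK_flip n _ (bpt_ok n a _ ha (by omega)),
        bA_flip n _ _ (bpt_ok n a _ ha (by omega)).1 (bpt_ok n a _ ha (by omega)).1
          (bpt_adj n a _ hn ha (by omega)), ?_⟩
      rw [h2]
      exact bA_flip n _ _ (bpt_ok n a _ ha (by omega)).1 (bpt_ok n a _ ha (by omega)).1
        (bpt_adj n a _ hn ha (by omega))

lemma boundary_mem (m : ℕ) (v : Fin m × Fin m)
    (h : v.1.val = 0 ∨ v.1.val = m - 1 ∨ v.2.val = 0 ∨ v.2.val = m - 1) :
    v ∈ (rowGridBoundary m).verts := by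
  simp only [rowGridBoundary, SimpleGraph.Subgraph.induce_verts, Set.mem_setOf_eq]
  exact h

lemma boundary_adj (m : ℕ) (u v : Fin m × Fin m)
    (hu : u.1.val = 0 ∨ u.1.val = m - 1 ∨ u.2.val = 0 ∨ u.2.val = m - 1)
    (hv : v.1.val = 0 ∨ v.1.val = m - 1 ∨ v.2.val = 0 ∨ v.2.val = m - 1)
    (h : bA (m - 1) (u.1.val, u.2.val) (v.1.val, v.2.val)) :
    (rowGridBoundary m).Adj u v := by
  rw [rowGridBoundary, SimpleGraph.Subgraph.induce_adj]
  refine ⟨hu, hv, ?_⟩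
  rw [SimpleGraph.Subgraph.top_adj, rowGridGraph, SimpleGraph.fromRel_adj]
  unfold bA at h
  simp only [Prod.ext_iff, Fin.ext_iff, ne_eq, not_and] at *
  constructor
  · intro hcon; omega
  · omega

lemma dist_le_one' {V : Type*} {G : SimpleGraph V} {a b : V} (h : G.Adj a b) :
    G.dist a b ≤ 1 :=
  le_trans (SimpleGraph.dist_le (SimpleGraph.Walk.cons h SimpleGraph.Walk.nil)) (by simp)

lemma dist_le_two' {V : Type*} {G : SimpleGraph V} {a b c : V} (h1 : G.Adj a b)
    (h2 : G.Adj b c) : G.dist a c ≤ 2 :=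
  le_trans (SimpleGraph.dist_le
    (SimpleGraph.Walk.cons h1 (SimpleGraph.Walk.cons h2 SimpleGraph.Walk.nil))) (by simp)

/-- For every `m ≥ 2`, the `m × m` grid with interior column edges
removed admits a retraction to its boundary cycle with stretch at most 2. -/
theorem rowGrid_retraction_stretch_two (m : ℕ) (hm : 2 ≤ m) :
    ∃ f : Fin m × Fin m → (rowGridBoundary m).verts,
      (∀ a : (rowGridBoundary m).verts, f (a : Fin m × Fin m) = a) ∧
      ∀ u v : Fin m × Fin m, (rowGridGraph m).Adj u v →
        (rowGridBoundary m).coe.dist (f u) (f v) ≤ 2 := by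
  set n := m - 1 with hn
  have hn1 : 1 ≤ n := by omega
  have hok : ∀ u : Fin m × Fin m, bOK n (bP n u.1.val u.2.val) := fun u =>
    bP_ok n u.1.val u.2.val (by have := u.1.isLt; omega) (by have := u.2.isLt; omega)
  let F : Fin m × Fin m → (rowGridBoundary m).verts := fun u =>
    ⟨(⟨(bP n u.1.val u.2.val).1, by have := (hok u).1; omega⟩,
      ⟨(bP n u.1.val u.2.val).2, by have := (hok u).2.1; omega⟩),
      boundary_mem m _ (by
        have := (hok u).2.2
        simpa using this)⟩
  have hFval : ∀ u : Fin m × Fin m,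
      (((F u : Fin m × Fin m).1.val : ℕ), ((F u : Fin m × Fin m).2.val : ℕ)) =
        bP n u.1.val u.2.val := fun u => rfl
  have hfix : ∀ u : Fin m × Fin m,
      (u.1.val = 0 ∨ u.1.val = n ∨ u.2.val = 0 ∨ u.2.val = n) →
      ((F u : Fin m × Fin m) = u) := by
    intro u hu
    have h := bP_fixed n u.1.val u.2.val hn1 (by have := u.1.isLt; omega)
      (by have := u.2.isLt; omega) hu
    apply Prod.ext <;> apply Fin.ext
    · show (bP n u.1.val u.2.val).1 = u.1.val
      rw [h]
    · show (bP n u.1.val u.2.val).2 = u.2.val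
      rw [h]
  refine ⟨F, ?_, ?_⟩
  · intro a
    obtain ⟨v, hv⟩ := a
    have hv' : v.1.val = 0 ∨ v.1.val = n ∨ v.2.val = 0 ∨ v.2.val = n := by
      simpa [rowGridBoundary] using hv
    exact Subtype.ext (hfix v hv')
  · have key : ∀ u v : Fin m × Fin m,
        ((u.1 = v.1 ∧ u.2.val + 1 = v.2.val) ∨
          (u.2 = v.2 ∧ (u.2.val = 0 ∨ u.2.val = m - 1) ∧ u.1.val + 1 = v.1.val)) →
        (rowGridBoundary m).coe.dist (F u) (F v) ≤ 2 := by
      intro u v hrel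
      rcases hrel with ⟨h1, h2⟩ | ⟨h1, h2, h3⟩
      · -- horizontal edge
        have h1' : u.1.val = v.1.val := by rw [h1]
        have hjlt : u.2.val < n := by have := v.2.isLt; omega
        have hPv : bP n v.1.val v.2.val = bP n u.1.val (u.2.val + 1) := by
          rw [← h1', ← h2]
        rcases bP_step n u.1.val u.2.val hn1 (by have := u.1.isLt; omega) hjlt with
          heq | hadj | ⟨w, hwok, hw1, hw2⟩
        · have : F u = F v := by
            apply Subtype.ext
            apply Prod.ext <;> apply Fin.ext
            · show (bP n u.1.val u.2.val).1 = (bP n v.1.val v.2.val).1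
              rw [hPv, heq]
            · show (bP n u.1.val u.2.val).2 = (bP n v.1.val v.2.val).2
              rw [hPv, heq]
          rw [this, SimpleGraph.dist_self]
          omega
        · have : (rowGridBoundary m).Adj (F u : Fin m × Fin m) (F v : Fin m × Fin m) := by
            apply boundary_adj m _ _ (by simpa using (hok u).2.2) (by simpa using (hok v).2.2)
            rw [hFval, hFval, hPv]
            simpa using hadj
          exact le_trans (dist_le_one' this) (by omega)
        · -- two-step path through w
          refine dist_le_two'
            (a := F u) (b := ⟨(⟨w.1, by have := hwok.1; omega⟩, ⟨w.2, by have := hwok.2.1; omega⟩),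
              boundary_mem m _ (by simpa using hwok.2.2)⟩) (c := F v) ?_ ?_
          · exact boundary_adj m _ _ (by simpa using (hok u).2.2) (by simpa using hwok.2.2)
                (by rw [hFval]; simpa using hw1)
          · exact boundary_adj m _ _ (by simpa using hwok.2.2) (by simpa using (hok v).2.2)
                (by rw [hFval, hPv]; simpa using hw2)
      · -- vertical edge on a boundary column
        have h1' : u.2.val = v.2.val := by rw [h1]
        have hu' : u.1.val = 0 ∨ u.1.val = n ∨ u.2.val = 0 ∨ u.2.val = n := by omega
        have hv' : v.1.val = 0 ∨ v.1.val = n ∨ v.2.val = 0 ∨ v.2.val = n := by omega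
        have : (rowGridBoundary m).Adj (F u : Fin m × Fin m) (F v : Fin m × Fin m) := by
          rw [hfix u hu', hfix v hv']
          apply boundary_adj m u v (by omega) (by omega)
          unfold bA
          simp only
          right
          exact ⟨h1', by omega, Or.inl h3⟩
        exact le_trans (dist_le_one' this) (by omega)
    intro u v hadj
    rw [rowGridGraph, SimpleGraph.fromRel_adj] at hadj
    rcases hadj.2 with h | h
    · exact key u v h
    · rw [SimpleGraph.dist_comm]
      exact key v u h
end
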